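/- arXiv:2303.15810 — 4 statements merged into one kernel-verified Lean document; each statement's English description precedes it below -/
import Mathlib

section
/- Fix s and Q : A → ℝ on a finite set A with μ(a) > 0 for all a, and α > 0. The function U ↦ E_{a∼μ}[𝟙(1/2 + (Q(a) − U)/(2α) > 0)·(1/2 + (Q(a) − U)/(2α))²] + U/α is convex and differentiable in U, and its derivative vanishes exactly when E_{a∼μ}[max{1/2 + (Q(a) − U)/(2α), 0}] = 1; hence any minimizer U* satisfies the normalization equation of the χ²-regularized optimal policy. -/
/-!
Since `t ↦ (t)₊²` is `C¹` with derivative `2 (t)₊`, the objective is differentiable with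
derivative `(1 − m(U))/α`, where `m(U) = ∑ μ a (1/2 + (Q a − U)/(2α))₊` is the mass of the
unnormalized policy. The mass is antitone in `U`, so the derivative is monotone and the objective
convex; a global minimizer is a critical point, i.e. `m(U) = 1`.
-/

open Filter Topology Asymptotics

/-- At the kink `t = 0` the function is `O(t²)`, hence has derivative `0` there. -/
theorem hasDerivAt_max_zero_sq (x : ℝ) :
    HasDerivAt (fun y : ℝ => max y 0 ^ 2) (2 * max x 0) x := by
  rcases lt_trichotomy x 0 with hx | rfl | hx
  · have hzero : (fun y : ℝ => max y 0 ^ 2) =ᶠ[𝓝 x] fun _ => 0 := by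
      filter_upwards [Iio_mem_nhds hx] with y hy
      simp [max_eq_right (Set.mem_Iio.mp hy).le]
    simpa [max_eq_right hx.le] using (hasDerivAt_const x (0 : ℝ)).congr_of_eventuallyEq hzero
  · rw [hasDerivAt_iff_isLittleO]
    have hbound : (fun y : ℝ => max y 0 ^ 2) =O[𝓝 0] fun y => y ^ 2 :=
      IsBigO.of_bound 1 <| Eventually.of_forall fun y => by
        simp only [norm_pow, Real.norm_eq_abs, one_mul]
        exact pow_le_pow_left₀ (abs_nonneg _)
          (by rw [abs_of_nonneg (le_max_right y 0)]; exact max_le (le_abs_self y) (abs_nonneg y)) 2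
    simpa using hbound.trans_isLittleO (isLittleO_pow_id (n := 2) one_lt_two)
  · have hsq : (fun y : ℝ => max y 0 ^ 2) =ᶠ[𝓝 x] fun y => y ^ 2 := by
      filter_upwards [Ioi_mem_nhds hx] with y hy
      simp [max_eq_left (Set.mem_Ioi.mp hy).le]
    simpa [max_eq_left hx.le] using (hasDerivAt_pow 2 x).congr_of_eventuallyEq hsq

theorem ite_pos_sq_eq_max_zero_sq (x : ℝ) : (if 0 < x then x ^ 2 else 0) = max x 0 ^ 2 := by
  split_ifs with hx
  · rw [max_eq_left hx.le]
  · rw [max_eq_right (not_lt.mp hx), zero_pow two_ne_zero]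

section ChiSq

variable {A : Type*} [Fintype A] (Q μ : A → ℝ) (α : ℝ)

/-- Total mass of the unnormalized χ²-regularized policy `a ↦ μ a · (1/2 + (Q a − U)/(2α))₊`. -/
noncomputable def chiSqPolicyMass (U : ℝ) : ℝ :=
  ∑ a, μ a * max (1 / 2 + (Q a - U) / (2 * α)) 0

noncomputable def chiSqObjective (U : ℝ) : ℝ :=
  (∑ a, μ a * max (1 / 2 + (Q a - U) / (2 * α)) 0 ^ 2) + U / α

theorem hasDerivAt_chiSqObjective (U : ℝ) :
    HasDerivAt (chiSqObjective Q μ α) ((1 - chiSqPolicyMass Q μ α U) / α) U := by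
  have hinner (a : A) :
      HasDerivAt (fun V : ℝ => 1 / 2 + (Q a - V) / (2 * α)) (-1 / (2 * α)) U := by
    simpa using (((hasDerivAt_id U).const_sub (Q a)).div_const (2 * α)).const_add (1 / 2)
  have hsum : HasDerivAt (chiSqObjective Q μ α)
      ((∑ a, μ a * (2 * max (1 / 2 + (Q a - U) / (2 * α)) 0 * (-1 / (2 * α)))) + 1 / α) U :=
    (HasDerivAt.fun_sum fun a _ =>
      ((hasDerivAt_max_zero_sq _).comp U (hinner a)).const_mul (μ a)).add
    ((hasDerivAt_id' U).div_const α)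
  refine hsum.congr_deriv ?_
  have hterm (a : A) (m : ℝ) : μ a * (2 * m * (-1 / (2 * α))) = -(μ a * m / α) := by ring
  simp only [hterm, Finset.sum_neg_distrib, chiSqPolicyMass, sub_div, Finset.sum_div]
  ring

theorem antitone_chiSqPolicyMass (hμ : ∀ a, 0 ≤ μ a) (hα : 0 ≤ α) :
    Antitone (chiSqPolicyMass Q μ α) := fun U V hUV =>
  Finset.sum_le_sum fun a _ => by gcongr; exact hμ a

end ChiSq

theorem stmt_7_general {A : Type*} [Fintype A]
    (Q μ : A → ℝ) (hμ : ∀ a, 0 < μ a)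
    (α : ℝ) (hα : 0 < α)
    (F : ℝ → ℝ)
    (hF : ∀ U : ℝ, F U =
      (∑ a, μ a * (if 0 < 1 / 2 + (Q a - U) / (2 * α) then
        (1 / 2 + (Q a - U) / (2 * α)) ^ 2 else 0)) + U / α) :
    ConvexOn ℝ Set.univ F ∧ Differentiable ℝ F ∧
      (∀ U : ℝ, deriv F U = 0 ↔
        ∑ a, μ a * max (1 / 2 + (Q a - U) / (2 * α)) 0 = 1) ∧
      (∀ U : ℝ, (∀ W : ℝ, F U ≤ F W) →
        ∑ a, μ a * max (1 / 2 + (Q a - U) / (2 * α)) 0 = 1) := by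
  obtain rfl : F = chiSqObjective Q μ α :=
    funext fun U => by simp only [hF, chiSqObjective, ite_pos_sq_eq_max_zero_sq]
  have hderiv (U : ℝ) : deriv (chiSqObjective Q μ α) U = (1 - chiSqPolicyMass Q μ α U) / α :=
    (hasDerivAt_chiSqObjective Q μ α U).deriv
  have hdiff : Differentiable ℝ (chiSqObjective Q μ α) :=
    fun U => (hasDerivAt_chiSqObjective Q μ α U).differentiableAt
  have hderiv_eq_zero (U : ℝ) :
      deriv (chiSqObjective Q μ α) U = 0 ↔ chiSqPolicyMass Q μ α U = 1 := by
    rw [hderiv, div_eq_zero_iff, sub_eq_zero, eq_comm, or_iff_left hα.ne']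
  refine ⟨Monotone.convexOn_univ_of_deriv hdiff fun U V hUV => ?_, hdiff, hderiv_eq_zero,
    fun U hmin => (hderiv_eq_zero U).mp ?_⟩
  · rw [hderiv, hderiv]
    gcongr
    exact antitone_chiSqPolicyMass Q μ α (fun a => (hμ a).le) hα.le hUV
  · exact (IsMinOn.isLocalMin (fun W _ => hmin W) univ_mem :
      IsLocalMin (chiSqObjective Q μ α) U).deriv_eq_zero

/-- The SQL `U`-objective
`U ↦ E_{a∼μ}[𝟙(1/2 + (Q a − U)/(2α) > 0) (1/2 + (Q a − U)/(2α))²] + U/α`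
is convex and differentiable, and its derivative vanishes exactly when
`E_{a∼μ}[max (1/2 + (Q a − U)/(2α)) 0] = 1`. -/
theorem stmt_7 {A : Type*} [Fintype A]
    (Q μ : A → ℝ) (hμ : ∀ a, 0 < μ a) (hμ1 : ∑ a, μ a = 1)
    (α : ℝ) (hα : 0 < α)
    (F : ℝ → ℝ)
    (hF : ∀ U : ℝ, F U =
      (∑ a, μ a * (if 0 < 1 / 2 + (Q a - U) / (2 * α) then
        (1 / 2 + (Q a - U) / (2 * α)) ^ 2 else 0)) + U / α) :
    ConvexOn ℝ Set.univ F ∧ Differentiable ℝ F ∧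
      (∀ U : ℝ, deriv F U = 0 ↔
        ∑ a, μ a * max (1 / 2 + (Q a - U) / (2 * α)) 0 = 1) ∧
      (∀ U : ℝ, (∀ W : ℝ, F U ≤ F W) →
        ∑ a, μ a * max (1 / 2 + (Q a - U) / (2 * α)) 0 = 1) :=
  stmt_7_general Q μ hμ α hα F hF
end

section
/- The normalization equation has a unique solution: for finite A, full-support μ, Q : A → ℝ, α > 0, and g : ℝ → ℝ continuous and strictly increasing on the set where it is positive (with g(y) → ∞ as y → ∞ and max{g(y),0} = 0 for y sufficiently small), the function u ↦ Σ_a μ(a)·max{g((Q(a) − u)/α), 0} is continuous, strictly decreasing where positive, tends to +∞ as u → −∞ and to 0 as u → +∞; hence there is exactly one u* with Σ_a μ(a)·max{g((Q(a) − u*)/α), 0} = 1. -/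
/-!
Once `g` is positive it stays positive (otherwise the intermediate value theorem produces a
point further right where `g` takes the value `g y / 2`, against strict monotonicity), so
`y ↦ max (g y) 0` is monotone, and strictly increasing wherever it is positive. The weighted sum
`F u = Σ_a μ a * max (g ((Q a - u) / α)) 0` therefore inherits continuity and strict
antitonicity on `{F > 0}`; a single term already drives it to `+∞` at `-∞`, and it vanishes
for large `u` because `g ≤ 0` far to the left. The intermediate value theorem gives a solution
of `F u = 1`, and strict antitonicity on `{F > 0}` makes it unique.
-/

open Filter

theorem existsUnique_eq_of_strictAntiOn_pos {F : ℝ → ℝ} (hF : Continuous F)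
    (hanti : StrictAntiOn F {u | 0 < F u}) (hbot : Tendsto F atBot atTop)
    (htop : Tendsto F atTop (nhds 0)) {c : ℝ} (hc : 0 < c) :
    ∃! u, F u = c := by
  obtain ⟨u₁, hu₁⟩ := (hbot.eventually_ge_atTop c).exists
  obtain ⟨u₂, hu₂⟩ := (htop.eventually (gt_mem_nhds hc)).exists
  obtain ⟨u, hu⟩ := intermediate_value_univ u₂ u₁ hF ⟨hu₂.le, hu₁⟩
  refine ⟨u, hu, fun w hw => hanti.injOn ?_ ?_ (hw.trans hu.symm)⟩
  · exact (hc.trans_eq hw.symm : 0 < F w)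
  · exact (hc.trans_eq hu.symm : 0 < F u)

section PositivePart

variable {g : ℝ → ℝ}

theorem pos_of_pos_of_le (hgmono : StrictMonoOn g {y | 0 < g y}) (hgcont : Continuous g)
    {y y' : ℝ} (hy : 0 < g y) (hyy' : y ≤ y') : 0 < g y' := by
  by_contra! hy'
  obtain ⟨z, ⟨hyz, -⟩, hz⟩ : ∃ z ∈ Set.Icc y y', g z = g y / 2 :=
    intermediate_value_Icc' hyy' hgcont.continuousOn ⟨by linarith, by linarith⟩
  have hz_pos : 0 < g z := by linarith
  have hyz' : y < z := hyz.lt_of_ne (by rintro rfl; linarith)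
  linarith [hgmono hy hz_pos hyz']

theorem monotone_max_zero (hgmono : StrictMonoOn g {y | 0 < g y}) (hgcont : Continuous g) :
    Monotone fun y => max (g y) 0 := by
  intro y y' hyy'
  rcases le_or_gt (g y) 0 with hy | hy
  · simp only [max_eq_right hy, le_max_right]
  · have hy' := pos_of_pos_of_le hgmono hgcont hy hyy'
    simp only [max_eq_left hy.le, max_eq_left hy'.le]
    exact hgmono.monotoneOn hy hy' hyy'

theorem max_zero_lt_max_zero (hgmono : StrictMonoOn g {y | 0 < g y}) (hgcont : Continuous g)
    {y y' : ℝ} (hy : 0 < g y) (hyy' : y < y') : max (g y) 0 < max (g y') 0 := by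
  have hy' := pos_of_pos_of_le hgmono hgcont hy hyy'.le
  rw [max_eq_left hy.le, max_eq_left hy'.le]
  exact hgmono hy hy' hyy'

end PositivePart

section WeightedSum

variable {A : Type*} [Fintype A] (Q : A → ℝ) {α : ℝ} {g : ℝ → ℝ}

theorem continuous_sum_max_zero (μ : A → ℝ) (hgcont : Continuous g) :
    Continuous fun u : ℝ => ∑ a, μ a * max (g ((Q a - u) / α)) 0 := by
  fun_prop

theorem strictAntiOn_sum_max_zero {μ : A → ℝ} (hμ : ∀ a, 0 < μ a) (hα : 0 < α)
    (hgcont : Continuous g) (hgmono : StrictMonoOn g {y | 0 < g y}) :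
    StrictAntiOn (fun u : ℝ => ∑ a, μ a * max (g ((Q a - u) / α)) 0)
      {u | 0 < ∑ a, μ a * max (g ((Q a - u) / α)) 0} := by
  intro u _ v (hv : 0 < ∑ a, μ a * max (g ((Q a - v) / α)) 0) huv
  obtain ⟨a₀, -, ha₀⟩ := Finset.exists_ne_zero_of_sum_ne_zero hv.ne'
  have hg_pos : 0 < g ((Q a₀ - v) / α) := by
    by_contra! h
    simp [max_eq_right h] at ha₀
  have hdiv : ∀ a, (Q a - v) / α < (Q a - u) / α := fun a => by gcongr
  refine Finset.sum_lt_sum (fun a _ => ?_) ⟨a₀, Finset.mem_univ _, ?_⟩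
  · exact mul_le_mul_of_nonneg_left (monotone_max_zero hgmono hgcont (hdiv a).le) (hμ a).le
  · exact mul_lt_mul_of_pos_left (max_zero_lt_max_zero hgmono hgcont hg_pos (hdiv a₀)) (hμ a₀)

theorem tendsto_sum_max_zero_atBot [Nonempty A] {μ : A → ℝ} (hμ : ∀ a, 0 < μ a)
    (hα : 0 < α) (hgtop : Tendsto g atTop atTop) :
    Tendsto (fun u : ℝ => ∑ a, μ a * max (g ((Q a - u) / α)) 0) atBot atTop := by
  obtain ⟨a₀⟩ := ‹Nonempty A›
  have harg : Tendsto (fun u : ℝ => (Q a₀ - u) / α) atBot atTop :=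
    (tendsto_atTop_add_const_left _ (Q a₀) tendsto_neg_atBot_atTop).atTop_div_const hα
  have hterm : Tendsto (fun u : ℝ => μ a₀ * max (g ((Q a₀ - u) / α)) 0) atBot atTop :=
    (tendsto_atTop_mono (fun _ => le_max_left _ _) (hgtop.comp harg)).const_mul_atTop (hμ a₀)
  refine tendsto_atTop_mono (fun u => ?_) hterm
  exact Finset.single_le_sum (f := fun a => μ a * max (g ((Q a - u) / α)) 0)
    (fun a _ => mul_nonneg (hμ a).le (le_max_right _ _)) (Finset.mem_univ a₀)

theorem tendsto_sum_max_zero_atTop (μ : A → ℝ) (hα : 0 < α) {y₀ : ℝ}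
    (hy₀ : ∀ y ≤ y₀, max (g y) 0 = 0) :
    Tendsto (fun u : ℝ => ∑ a, μ a * max (g ((Q a - u) / α)) 0) atTop (nhds 0) := by
  have hall : ∀ᶠ u in atTop, ∀ a, (Q a - u) / α ≤ y₀ := by
    refine eventually_all.2 fun a => (eventually_ge_atTop (Q a - α * y₀)).mono fun u hu => ?_
    rw [div_le_iff₀ hα]
    linarith
  refine tendsto_const_nhds.congr' ?_
  filter_upwards [hall] with u hu
  simp [hy₀ _ (hu _)]

end WeightedSum

theorem stmt_11_general {A : Type*} [Fintype A] [Nonempty A]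
    (Q μ : A → ℝ) (hμ : ∀ a, 0 < μ a)
    (α : ℝ) (hα : 0 < α)
    (g : ℝ → ℝ) (hgcont : Continuous g)
    (hgmono : StrictMonoOn g {y : ℝ | 0 < g y})
    (hgtop : Tendsto g atTop atTop)
    (hgzero : ∃ y₀ : ℝ, ∀ y ≤ y₀, max (g y) 0 = 0) :
    Continuous (fun u : ℝ => ∑ a, μ a * max (g ((Q a - u) / α)) 0) ∧
    StrictAntiOn (fun u : ℝ => ∑ a, μ a * max (g ((Q a - u) / α)) 0)
      {u : ℝ | 0 < ∑ a, μ a * max (g ((Q a - u) / α)) 0} ∧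
    Tendsto (fun u : ℝ => ∑ a, μ a * max (g ((Q a - u) / α)) 0) atBot atTop ∧
    Tendsto (fun u : ℝ => ∑ a, μ a * max (g ((Q a - u) / α)) 0) atTop (nhds 0) ∧
    (∃! u : ℝ, ∑ a, μ a * max (g ((Q a - u) / α)) 0 = 1) := by
  obtain ⟨y₀, hy₀⟩ := hgzero
  have hcont := continuous_sum_max_zero Q μ (α := α) hgcont
  have hanti := strictAntiOn_sum_max_zero Q hμ hα hgcont hgmono
  have hbot := tendsto_sum_max_zero_atBot Q hμ hα hgtop
  have htop := tendsto_sum_max_zero_atTop Q μ hα hy₀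
  exact ⟨hcont, hanti, hbot, htop,
    existsUnique_eq_of_strictAntiOn_pos hcont hanti hbot htop one_pos⟩

/-- Uniqueness of the normalizer: the map
`u ↦ Σ_a μ a * max (g ((Q a − u)/α)) 0` is continuous, strictly decreasing where positive,
tends to `+∞` as `u → −∞` and to `0` as `u → +∞`; hence there is exactly one `u*` with
`Σ_a μ a * max (g ((Q a − u*)/α)) 0 = 1`. -/
theorem stmt_11 {A : Type*} [Fintype A] [Nonempty A]
    (Q μ : A → ℝ) (hμ : ∀ a, 0 < μ a) (hμ1 : ∑ a, μ a = 1)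
    (α : ℝ) (hα : 0 < α)
    (g : ℝ → ℝ) (hgcont : Continuous g)
    (hgmono : StrictMonoOn g {y : ℝ | 0 < g y})
    (hgtop : Tendsto g atTop atTop)
    (hgzero : ∃ y₀ : ℝ, ∀ y ≤ y₀, max (g y) 0 = 0) :
    Continuous (fun u : ℝ => ∑ a, μ a * max (g ((Q a - u) / α)) 0) ∧
    StrictAntiOn (fun u : ℝ => ∑ a, μ a * max (g ((Q a - u) / α)) 0)
      {u : ℝ | 0 < ∑ a, μ a * max (g ((Q a - u) / α)) 0} ∧
    Tendsto (fun u : ℝ => ∑ a, μ a * max (g ((Q a - u) / α)) 0) atBot atTop ∧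
    Tendsto (fun u : ℝ => ∑ a, μ a * max (g ((Q a - u) / α)) 0) atTop (nhds 0) ∧
    (∃! u : ℝ, ∑ a, μ a * max (g ((Q a - u) / α)) 0 = 1) :=
  stmt_11_general Q μ hμ α hα g hgcont hgmono hgtop hgzero
end

section
/- In the χ² case f(x) = x − 1, the optimal policy π*(a|s) = μ(a|s)·max{1/2 + (Q*(s,a) − U*(s))/(2α), 0} assigns zero probability exactly to those actions a with Q*(s,a) ≤ U*(s) − α, and its support shrinks (weakly) as α decreases with Q* and the relative ordering fixed. -/
/-!
Writing `1/2 + (q - U)/(2α) = (q - (U - α))/(2α)`, the χ² policy is positive exactly above the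
threshold `U - α`. If, for `α₁ ≤ α₂`, the threshold rose (`U₁ - α₁ < U₂ - α₂`), every weight of
the `α₂`-policy would be at most the `α₁`-weight and strictly smaller on its (nonempty) support, so
the two policies could not both be normalized. Hence the threshold `U - α` is antitone in `α`.
-/

open Finset

/-- The policy `π*(a|s)` of the χ² case at a fixed state, `U` standing for the normalizer
`U*(s)`. -/
noncomputable def chi2Policy {A : Type*} (μ Q : A → ℝ) (α U : ℝ) (a : A) : ℝ :=
  μ a * max (1 / 2 + (Q a - U) / (2 * α)) 0

section Chi2Policy

variable {A : Type*} {μ Q : A → ℝ} {α α₁ α₂ U U₁ U₂ : ℝ} {a : A}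

lemma chi2_score_eq (hα : α ≠ 0) (q : ℝ) :
    1 / 2 + (q - U) / (2 * α) = (q - (U - α)) / (2 * α) := by
  field_simp
  ring

lemma chi2Policy_nonneg (hμ : 0 ≤ μ a) : 0 ≤ chi2Policy μ Q α U a :=
  mul_nonneg hμ (le_max_right _ _)

lemma chi2Policy_pos_iff (hμ : 0 < μ a) (hα : 0 < α) :
    0 < chi2Policy μ Q α U a ↔ U - α < Q a := by
  rw [chi2Policy, mul_pos_iff_of_pos_left hμ, lt_max_iff, chi2_score_eq hα.ne',
    div_pos_iff_of_pos_right (by positivity), sub_pos, lt_self_iff_false, or_false]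

lemma chi2Policy_eq_zero_iff (hμ : 0 < μ a) (hα : 0 < α) :
    chi2Policy μ Q α U a = 0 ↔ Q a ≤ U - α := by
  rw [← not_lt, ← chi2Policy_pos_iff hμ hα, (chi2Policy_nonneg hμ.le).lt_iff_ne', not_not]

lemma chi2Policy_le_of_threshold_le (hμ : 0 ≤ μ a) (hα₁ : 0 < α₁) (hα : α₁ ≤ α₂)
    (hU : U₁ - α₁ ≤ U₂ - α₂) : chi2Policy μ Q α₂ U₂ a ≤ chi2Policy μ Q α₁ U₁ a := by
  refine mul_le_mul_of_nonneg_left ?_ hμ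
  rw [chi2_score_eq (hα₁.trans_le hα).ne', chi2_score_eq hα₁.ne']
  refine max_le ?_ (le_max_right _ _)
  rcases le_or_gt (Q a) (U₂ - α₂) with hQ | hQ
  · exact (div_nonpos_of_nonpos_of_nonneg (by linarith) (by linarith)).trans (le_max_right _ _)
  · exact (div_le_div₀ (by linarith) (by linarith) (by linarith) (by linarith)).trans
      (le_max_left _ _)

lemma chi2Policy_lt_of_threshold_lt (hμ : 0 < μ a) (hα₁ : 0 < α₁) (hα : α₁ ≤ α₂)
    (hU : U₁ - α₁ < U₂ - α₂) (hQ : U₂ - α₂ < Q a) :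
    chi2Policy μ Q α₂ U₂ a < chi2Policy μ Q α₁ U₁ a := by
  refine mul_lt_mul_of_pos_left ?_ hμ
  rw [chi2_score_eq (hα₁.trans_le hα).ne', chi2_score_eq hα₁.ne',
    max_eq_left (div_pos (by linarith) (by linarith)).le,
    max_eq_left (div_pos (by linarith) (by linarith)).le]
  exact div_lt_div₀ (by linarith) (by linarith) (by linarith) (by linarith)

variable [Fintype A]

lemma chi2_threshold_antitone (hμ : ∀ a, 0 < μ a) (hα₁ : 0 < α₁) (hα : α₁ ≤ α₂)
    (hU₁ : ∑ a, chi2Policy μ Q α₁ U₁ a = 1) (hU₂ : ∑ a, chi2Policy μ Q α₂ U₂ a = 1) :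
    U₂ - α₂ ≤ U₁ - α₁ := by
  by_contra! hU
  obtain ⟨a₀, -, ha₀⟩ : ∃ a ∈ univ, 0 < chi2Policy μ Q α₂ U₂ a :=
    exists_lt_of_sum_lt (f := fun _ => 0) (by simp [hU₂])
  have : ∑ a, chi2Policy μ Q α₂ U₂ a < ∑ a, chi2Policy μ Q α₁ U₁ a :=
    sum_lt_sum (fun a _ => chi2Policy_le_of_threshold_le (hμ a).le hα₁ hα hU.le)
      ⟨a₀, mem_univ _, chi2Policy_lt_of_threshold_lt (hμ a₀) hα₁ hα hU
        ((chi2Policy_pos_iff (hμ a₀) (hα₁.trans_le hα)).mp ha₀)⟩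
  linarith

lemma chi2Policy_support_mono (hμ : ∀ a, 0 < μ a) (hα₁ : 0 < α₁) (hα : α₁ ≤ α₂)
    (hU₁ : ∑ a, chi2Policy μ Q α₁ U₁ a = 1) (hU₂ : ∑ a, chi2Policy μ Q α₂ U₂ a = 1) :
    {a | 0 < chi2Policy μ Q α₁ U₁ a} ⊆ {a | 0 < chi2Policy μ Q α₂ U₂ a} :=
  fun a ha => (chi2Policy_pos_iff (hμ a) (hα₁.trans_le hα)).mpr <| by
    linarith [(chi2Policy_pos_iff (hμ a) hα₁).mp ha, chi2_threshold_antitone hμ hα₁ hα hU₁ hU₂]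

end Chi2Policy

theorem stmt_12_general {A : Type*} [Fintype A]
    (Q μ : A → ℝ) (hμ : ∀ a, 0 < μ a) :
    (∀ (α U : ℝ), 0 < α →
      (∑ a, μ a * max (1 / 2 + (Q a - U) / (2 * α)) 0 = 1) →
      ∀ a, μ a * max (1 / 2 + (Q a - U) / (2 * α)) 0 = 0 ↔ Q a ≤ U - α) ∧
    (∀ (α₁ α₂ U₁ U₂ : ℝ), 0 < α₁ → α₁ ≤ α₂ →
      (∑ a, μ a * max (1 / 2 + (Q a - U₁) / (2 * α₁)) 0 = 1) →
      (∑ a, μ a * max (1 / 2 + (Q a - U₂) / (2 * α₂)) 0 = 1) →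
      {a : A | 0 < μ a * max (1 / 2 + (Q a - U₁) / (2 * α₁)) 0} ⊆
        {a : A | 0 < μ a * max (1 / 2 + (Q a - U₂) / (2 * α₂)) 0}) :=
  ⟨fun _ _ hα _ a => chi2Policy_eq_zero_iff (hμ a) hα,
    fun _ _ _ _ hα₁ hα hU₁ hU₂ => chi2Policy_support_mono hμ hα₁ hα hU₁ hU₂⟩

/-- χ² case `f x = x − 1`: the optimal policy
`π* a = μ a * max (1/2 + (Q a − U)/(2α)) 0` assigns zero probability exactly to actions with
`Q a ≤ U − α`, and the support shrinks (weakly) as `α` decreases (with `Q*` fixed and each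
`U` the corresponding normalizer). -/
theorem stmt_12 {A : Type*} [Fintype A] [Nonempty A]
    (Q μ : A → ℝ) (hμ : ∀ a, 0 < μ a) (hμ1 : ∑ a, μ a = 1) :
    (∀ (α U : ℝ), 0 < α →
      (∑ a, μ a * max (1 / 2 + (Q a - U) / (2 * α)) 0 = 1) →
      ∀ a, μ a * max (1 / 2 + (Q a - U) / (2 * α)) 0 = 0 ↔ Q a ≤ U - α) ∧
    (∀ (α₁ α₂ U₁ U₂ : ℝ), 0 < α₁ → α₁ ≤ α₂ →
      (∑ a, μ a * max (1 / 2 + (Q a - U₁) / (2 * α₁)) 0 = 1) →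
      (∑ a, μ a * max (1 / 2 + (Q a - U₂) / (2 * α₂)) 0 = 1) →
      {a : A | 0 < μ a * max (1 / 2 + (Q a - U₁) / (2 * α₁)) 0} ⊆
        {a : A | 0 < μ a * max (1 / 2 + (Q a - U₂) / (2 * α₂)) 0}) :=
  stmt_12_general Q μ hμ
end

section
/- Expectile characterization: for a real random variable X with finite support and τ ∈ (0,1), the unique minimizer v of E[|τ − 𝟙(X − v < 0)|·(X − v)²] satisfies the first-order condition τ·E[(X − v)₊] = (1−τ)·E[(v − X)₊], and as τ → 1⁻ the minimizer converges to max X. -/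
/-!
Write `ρ_τ(u) = |τ - 𝟙(u < 0)| u²` and `ψ_τ(u) = τ u₊ - (1 - τ) u₋`. Expanding `ρ_τ` around `u`
in steps `h` gives `ρ_τ(u - h) = ρ_τ(u) - 2 h ψ_τ(u) + κ h²` with `κ` between `min τ (1 - τ)` and
`max τ (1 - τ)`. Summing against `p`, the loss `L(v) = E ρ_τ(X - v)` is strongly convex and
smooth with derivative `-2 g(v)`, `g(v) = E ψ_τ(X - v)`. So the minimizers of `L` are exactly the
zeros of the continuous function `g`, and there is exactly one: `g ≥ 0` at `min X`, `g ≤ 0` at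
`max X`. As `τ → 1`, the equation `τ E(X - v)₊ = (1 - τ) E(v - X)₊` forces `v ≤ max X` and
`τ P(X = max X) (max X - v) ≤ (1 - τ) (max X - min X)`, which squeezes `v` to `max X`.
-/

open Filter Topology

noncomputable section

def expectileTerm (τ u : ℝ) : ℝ :=
  |τ - (if u < 0 then 1 else 0)| * u ^ 2

lemma expectileTerm_eq (τ u : ℝ) (h0 : 0 ≤ τ) (h1 : τ ≤ 1) :
    expectileTerm τ u = τ * max u 0 ^ 2 + (1 - τ) * max (-u) 0 ^ 2 := by
  unfold expectileTerm
  rcases lt_or_ge u 0 with hu | hu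
  · rw [if_pos hu, abs_of_nonpos (by linarith), max_eq_right hu.le, max_eq_left (by linarith)]
    ring
  · rw [if_neg hu.not_gt, sub_zero, abs_of_nonneg h0, max_eq_left hu, max_eq_right (by linarith)]
    ring

section Pointwise

variable {τ : ℝ} (a v w : ℝ)

lemma expectileTerm_le (h0 : 0 ≤ τ) (h1 : τ ≤ 1) :
    expectileTerm τ (a - w) ≤ expectileTerm τ (a - v)
      - 2 * (w - v) * (τ * max (a - v) 0 - (1 - τ) * max (v - a) 0)
      + max τ (1 - τ) * (w - v) ^ 2 := by
  rw [expectileTerm_eq _ _ h0 h1, expectileTerm_eq _ _ h0 h1, neg_sub, neg_sub]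
  have hc1 : 0 ≤ max τ (1 - τ) - τ := sub_nonneg.2 (le_max_left _ _)
  have hc2 : 0 ≤ max τ (1 - τ) - (1 - τ) := sub_nonneg.2 (le_max_right _ _)
  rcases le_total a v with hv | hv <;> rcases le_total a w with hw | hw <;>
    simp only [max_eq_left, max_eq_right, sub_nonneg, sub_nonpos, hv, hw] <;>
    nlinarith [mul_nonneg hc1 (sq_nonneg (w - v)), mul_nonneg hc2 (sq_nonneg (w - v)),
      mul_nonneg hc1 (mul_nonneg (sub_nonneg.2 hv) (sub_nonneg.2 hw)),
      mul_nonneg hc2 (mul_nonneg (sub_nonneg.2 hv) (sub_nonneg.2 hw))]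

lemma le_expectileTerm (h0 : 0 ≤ τ) (h1 : τ ≤ 1) :
    expectileTerm τ (a - v) - 2 * (w - v) * (τ * max (a - v) 0 - (1 - τ) * max (v - a) 0)
      + min τ (1 - τ) * (w - v) ^ 2 ≤ expectileTerm τ (a - w) := by
  rw [expectileTerm_eq _ _ h0 h1, expectileTerm_eq _ _ h0 h1, neg_sub, neg_sub]
  have hc1 : 0 ≤ τ - min τ (1 - τ) := sub_nonneg.2 (min_le_left _ _)
  have hc2 : 0 ≤ (1 - τ) - min τ (1 - τ) := sub_nonneg.2 (min_le_right _ _)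
  rcases le_total a v with hv | hv <;> rcases le_total a w with hw | hw <;>
    simp only [max_eq_left, max_eq_right, sub_nonneg, sub_nonpos, hv, hw] <;>
    nlinarith [mul_nonneg hc1 (sq_nonneg (w - v)), mul_nonneg hc2 (sq_nonneg (w - v)),
      mul_nonneg hc1 (mul_nonneg (sub_nonneg.2 hv) (sub_nonneg.2 hw)),
      mul_nonneg hc2 (mul_nonneg (sub_nonneg.2 hv) (sub_nonneg.2 hw))]

end Pointwise

section Expectile

variable {Ω : Type*} [Fintype Ω] (p X : Ω → ℝ)

def expectileLoss (τ v : ℝ) : ℝ :=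
  ∑ ω, p ω * expectileTerm τ (X ω - v)

/-- `expectileLoss p X τ` has derivative `-2 * expectileGap p X τ`. -/
def expectileGap (τ v : ℝ) : ℝ :=
  τ * ∑ ω, p ω * max (X ω - v) 0 - (1 - τ) * ∑ ω, p ω * max (v - X ω) 0

variable {p X} {τ : ℝ}

lemma expectileLoss_sub_gap_add_sq (hp1 : ∑ ω, p ω = 1) (v w c : ℝ) :
    expectileLoss p X τ v - 2 * (w - v) * expectileGap p X τ v + c * (w - v) ^ 2 =
      ∑ ω, p ω * (expectileTerm τ (X ω - v)
        - 2 * (w - v) * (τ * max (X ω - v) 0 - (1 - τ) * max (v - X ω) 0) + c * (w - v) ^ 2) := by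
  conv_lhs => rw [← mul_one (c * _), ← hp1]
  simp only [expectileLoss, expectileGap, Finset.mul_sum, ← Finset.sum_sub_distrib,
    ← Finset.sum_add_distrib]
  exact Finset.sum_congr rfl fun ω _ => by ring

lemma expectileLoss_le (hp : ∀ ω, 0 ≤ p ω) (hp1 : ∑ ω, p ω = 1) (h0 : 0 ≤ τ) (h1 : τ ≤ 1)
    (v w : ℝ) :
    expectileLoss p X τ w ≤
      expectileLoss p X τ v - 2 * (w - v) * expectileGap p X τ v + max τ (1 - τ) * (w - v) ^ 2 := by
  rw [expectileLoss_sub_gap_add_sq hp1]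
  exact Finset.sum_le_sum fun ω _ =>
    mul_le_mul_of_nonneg_left (expectileTerm_le (X ω) v w h0 h1) (hp ω)

lemma le_expectileLoss (hp : ∀ ω, 0 ≤ p ω) (hp1 : ∑ ω, p ω = 1) (h0 : 0 ≤ τ) (h1 : τ ≤ 1)
    (v w : ℝ) :
    expectileLoss p X τ v - 2 * (w - v) * expectileGap p X τ v + min τ (1 - τ) * (w - v) ^ 2 ≤
      expectileLoss p X τ w := by
  rw [expectileLoss_sub_gap_add_sq hp1]
  exact Finset.sum_le_sum fun ω _ =>
    mul_le_mul_of_nonneg_left (le_expectileTerm (X ω) v w h0 h1) (hp ω)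

lemma expectileGap_eq_zero_of_isMin (hp : ∀ ω, 0 ≤ p ω) (hp1 : ∑ ω, p ω = 1) (h0 : 0 ≤ τ)
    (h1 : τ ≤ 1) {v : ℝ} (hv : ∀ w, expectileLoss p X τ v ≤ expectileLoss p X τ w) :
    expectileGap p X τ v = 0 := by
  set g := expectileGap p X τ v
  set C := max τ (1 - τ)
  have hC : 0 < C := by linarith [le_max_left τ (1 - τ), le_max_right τ (1 - τ)]
  -- a step of length `g / C` from `v` would lower the loss by at least `g ^ 2 / C`
  have hstep := (hv (v + g / C)).trans (expectileLoss_le hp hp1 h0 h1 v (v + g / C))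
  have hdecr : C * (v + g / C - v) ^ 2 - 2 * (v + g / C - v) * g = -(g ^ 2 / C) := by
    field_simp
    ring
  have hg : g ^ 2 ≤ 0 := by simpa using (div_le_iff₀ hC).1 (by linarith : g ^ 2 / C ≤ 0)
  exact (sq_nonpos_iff g).1 hg

lemma expectileLoss_add_sq_le_of_expectileGap_eq_zero (hp : ∀ ω, 0 ≤ p ω)
    (hp1 : ∑ ω, p ω = 1) (h0 : 0 ≤ τ) (h1 : τ ≤ 1) {v : ℝ} (hv : expectileGap p X τ v = 0) (w : ℝ) :
    expectileLoss p X τ v + min τ (1 - τ) * (w - v) ^ 2 ≤ expectileLoss p X τ w := by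
  simpa [hv] using le_expectileLoss (X := X) hp hp1 h0 h1 v w

lemma continuous_expectileGap : Continuous (expectileGap p X τ) := by
  unfold expectileGap
  fun_prop

lemma exists_expectileGap_eq_zero [Nonempty Ω] (hp : ∀ ω, 0 ≤ p ω) (h0 : 0 ≤ τ) (h1 : τ ≤ 1) :
    ∃ v, expectileGap p X τ v = 0 := by
  obtain ⟨ωmin, hmin⟩ := Finite.exists_min X
  obtain ⟨ωmax, hmax⟩ := Finite.exists_max X
  have hlo : 0 ≤ expectileGap p X τ (X ωmin) := by
    have : ∑ ω, p ω * max (X ωmin - X ω) 0 = 0 :=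
      Finset.sum_eq_zero fun ω _ => by simp [hmin ω]
    rw [expectileGap, this, mul_zero, sub_zero]
    exact mul_nonneg h0 (Finset.sum_nonneg fun ω _ => mul_nonneg (hp ω) (le_max_right _ _))
  have hhi : expectileGap p X τ (X ωmax) ≤ 0 := by
    have : ∑ ω, p ω * max (X ω - X ωmax) 0 = 0 :=
      Finset.sum_eq_zero fun ω _ => by simp [hmax ω]
    rw [expectileGap, this, mul_zero, zero_sub, neg_nonpos]
    exact mul_nonneg (by linarith)
      (Finset.sum_nonneg fun ω _ => mul_nonneg (hp ω) (le_max_right _ _))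
  obtain ⟨v, -, hv⟩ := intermediate_value_Icc' (hmin ωmax) continuous_expectileGap.continuousOn
    ⟨hhi, hlo⟩
  exact ⟨v, hv⟩

lemma existsUnique_isMin_expectileLoss [Nonempty Ω] (hp : ∀ ω, 0 ≤ p ω) (hp1 : ∑ ω, p ω = 1)
    (h0 : 0 < τ) (h1 : τ < 1) :
    ∃! v, ∀ w, expectileLoss p X τ v ≤ expectileLoss p X τ w := by
  obtain ⟨v, hv⟩ := exists_expectileGap_eq_zero hp h0.le h1.le
  have hc : 0 < min τ (1 - τ) := lt_min h0 (sub_pos.2 h1)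
  have hgrowth := expectileLoss_add_sq_le_of_expectileGap_eq_zero hp hp1 h0.le h1.le hv
  refine ⟨v, fun w => ?_, fun w hw => ?_⟩
  · linarith [hgrowth w, mul_nonneg hc.le (sq_nonneg (w - v))]
  · have hsq : min τ (1 - τ) * (w - v) ^ 2 ≤ 0 := by linarith [hgrowth w, hw v]
    exact sub_eq_zero.1 <| (sq_nonpos_iff _).1 <| nonpos_of_mul_nonpos_right hsq hc

lemma exists_le_of_expectileGap_eq_zero [Nonempty Ω] (hp : ∀ ω, 0 < p ω) (h1 : τ < 1) {v : ℝ}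
    (hv : expectileGap p X τ v = 0) : ∃ ω, v ≤ X ω := by
  by_contra! hlt
  have hpos : ∑ ω, p ω * max (X ω - v) 0 = 0 :=
    Finset.sum_eq_zero fun ω _ => by simp [(hlt ω).le]
  have hneg : 0 < ∑ ω, p ω * max (v - X ω) 0 :=
    Finset.sum_pos (fun ω _ => mul_pos (hp ω) (lt_max_of_lt_left (sub_pos.2 (hlt ω))))
      Finset.univ_nonempty
  rw [expectileGap, hpos] at hv
  nlinarith

lemma mul_sub_le_of_expectileGap_eq_zero (hp : ∀ ω, 0 ≤ p ω) (hp1 : ∑ ω, p ω = 1) (h0 : 0 ≤ τ)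
    (h1 : τ ≤ 1) {v a : ℝ} (hv : expectileGap p X τ v = 0) {ω₀ : Ω} (hvω₀ : v ≤ X ω₀)
    (ha : ∀ ω, a ≤ X ω) :
    τ * (p ω₀ * (X ω₀ - v)) ≤ (1 - τ) * (X ω₀ - a) :=
  calc τ * (p ω₀ * (X ω₀ - v))
      ≤ τ * ∑ ω, p ω * max (X ω - v) 0 := by
        gcongr
        calc p ω₀ * (X ω₀ - v) = p ω₀ * max (X ω₀ - v) 0 := by rw [max_eq_left (by linarith)]
          _ ≤ _ := Finset.single_le_sum (f := fun ω => p ω * max (X ω - v) 0)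
            (fun ω _ => mul_nonneg (hp ω) (le_max_right _ _)) (Finset.mem_univ ω₀)
    _ = (1 - τ) * ∑ ω, p ω * max (v - X ω) 0 := sub_eq_zero.1 hv
    _ ≤ (1 - τ) * ∑ ω, p ω * (X ω₀ - a) := by
        gcongr with ω
        exacts [hp ω, max_le (by linarith [ha ω]) (by linarith [ha ω₀])]
    _ = (1 - τ) * (X ω₀ - a) := by rw [← Finset.sum_mul, hp1, one_mul]

lemma tendsto_iSup_of_expectileGap_eq_zero [Nonempty Ω] (hp : ∀ ω, 0 < p ω)
    (hp1 : ∑ ω, p ω = 1) {m : ℝ → ℝ} (hm : ∀ τ ∈ Set.Ioo (0 : ℝ) 1, expectileGap p X τ (m τ) = 0) :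
    Tendsto m (𝓝[<] 1) (𝓝 (⨆ ω, X ω)) := by
  obtain ⟨ωmax, hmax⟩ := Finite.exists_max X
  obtain ⟨ωmin, hmin⟩ := Finite.exists_min X
  rw [le_antisymm (ciSup_le hmax) (le_ciSup (Finite.bddAbove_range X) ωmax)]
  have hupper : ∀ τ ∈ Set.Ioo (0 : ℝ) 1, m τ ≤ X ωmax := fun τ hτ => by
    obtain ⟨ω, hω⟩ := exists_le_of_expectileGap_eq_zero hp hτ.2 (hm τ hτ)
    exact hω.trans (hmax ω)
  have hlower : ∀ τ ∈ Set.Ioo (0 : ℝ) 1,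
      X ωmax - (1 - τ) * (X ωmax - X ωmin) / (τ * p ωmax) ≤ m τ := fun τ hτ => by
    have := mul_sub_le_of_expectileGap_eq_zero (fun ω => (hp ω).le) hp1 hτ.1.le hτ.2.le
      (hm τ hτ) (hupper τ hτ) hmin
    rw [sub_le_comm, le_div_iff₀ (mul_pos hτ.1 (hp ωmax))]
    linarith
  have hlim : Tendsto (fun τ => X ωmax - (1 - τ) * (X ωmax - X ωmin) / (τ * p ωmax)) (𝓝[<] 1)
      (𝓝 (X ωmax)) := by
    have : ContinuousAt (fun τ => X ωmax - (1 - τ) * (X ωmax - X ωmin) / (τ * p ωmax)) 1 := by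
      fun_prop (disch := simp [(hp ωmax).ne'])
    simpa using this.tendsto.mono_left nhdsWithin_le_nhds
  refine tendsto_of_tendsto_of_tendsto_of_le_of_le' hlim tendsto_const_nhds ?_ ?_ <;>
    filter_upwards [Ioo_mem_nhdsLT one_pos] with τ hτ
  exacts [hlower τ hτ, hupper τ hτ]

end Expectile

end

/-- Expectile characterization: for a finitely supported random variable `X` and
`τ ∈ (0,1)`, the expectile loss `v ↦ E[|τ − 𝟙(X − v < 0)| (X − v)²]` has a unique minimizer,
any minimizer satisfies `τ E[(X − v)₊] = (1 − τ) E[(v − X)₊]`, and as `τ → 1⁻` the minimizer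
converges to `max X`. -/
theorem stmt_18 {Ω : Type*} [Fintype Ω] [Nonempty Ω]
    (p : Ω → ℝ) (hp : ∀ ω, 0 < p ω) (hp1 : ∑ ω, p ω = 1)
    (X : Ω → ℝ) :
    (∀ τ ∈ Set.Ioo (0 : ℝ) 1, ∃! v : ℝ, ∀ w : ℝ,
      (∑ ω, p ω * (|τ - (if X ω - v < 0 then 1 else 0)| * (X ω - v) ^ 2)) ≤
        ∑ ω, p ω * (|τ - (if X ω - w < 0 then 1 else 0)| * (X ω - w) ^ 2)) ∧
    (∀ τ ∈ Set.Ioo (0 : ℝ) 1, ∀ v : ℝ,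
      (∀ w : ℝ,
        (∑ ω, p ω * (|τ - (if X ω - v < 0 then 1 else 0)| * (X ω - v) ^ 2)) ≤
          ∑ ω, p ω * (|τ - (if X ω - w < 0 then 1 else 0)| * (X ω - w) ^ 2)) →
      τ * ∑ ω, p ω * max (X ω - v) 0 = (1 - τ) * ∑ ω, p ω * max (v - X ω) 0) ∧
    (∀ m : ℝ → ℝ,
      (∀ τ ∈ Set.Ioo (0 : ℝ) 1, ∀ w : ℝ,
        (∑ ω, p ω * (|τ - (if X ω - m τ < 0 then 1 else 0)| * (X ω - m τ) ^ 2)) ≤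
          ∑ ω, p ω * (|τ - (if X ω - w < 0 then 1 else 0)| * (X ω - w) ^ 2)) →
      Tendsto m (nhdsWithin 1 (Set.Iio 1)) (nhds (⨆ ω, X ω))) := by
  have hp0 : ∀ ω, 0 ≤ p ω := fun ω => (hp ω).le
  have hfoc : ∀ τ ∈ Set.Ioo (0 : ℝ) 1, ∀ v,
      (∀ w, expectileLoss p X τ v ≤ expectileLoss p X τ w) → expectileGap p X τ v = 0 :=
    fun τ hτ _ hv => expectileGap_eq_zero_of_isMin hp0 hp1 hτ.1.le hτ.2.le hv
  exact ⟨fun τ hτ => existsUnique_isMin_expectileLoss hp0 hp1 hτ.1 hτ.2,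
    fun τ hτ v hv => sub_eq_zero.1 (hfoc τ hτ v hv),
    fun m hm => tendsto_iSup_of_expectileGap_eq_zero hp hp1 fun τ hτ => hfoc τ hτ (m τ) (hm τ hτ)⟩
end
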